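/- If t is a VSC-normal natural term, then its translation tˢ reduces by k renaming cut-elimination steps, with k at most the size of t, to a cut-free vanilla term. -/
import Mathlib


/-- Vanilla λ-terms: var, abstraction, cut [s/x]t, subtraction [y s/x]t. -/
inductive VTerm : Type
  | var : ℕ → VTerm
  | lam : ℕ → VTerm → VTerm
  | cut : VTerm → ℕ → VTerm → VTerm
  | sub : ℕ → VTerm → ℕ → VTerm → VTerm
  deriving DecidableEq

namespace VTerm

/-- Values: variables and abstractions. -/
inductive IsValue : VTerm → Prop
  | var (x : ℕ) : IsValue (var x)
  | lam (x : ℕ) (t : VTerm) : IsValue (lam x t)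

/-- Free variables of a vanilla term. -/
def fv : VTerm → Finset ℕ
  | var x => {x}
  | lam x t => fv t \ {x}
  | cut s x t => fv s ∪ (fv t \ {x})
  | sub y s x t => insert y (fv s ∪ (fv t \ {x}))

/-- Meta-level substitution of a value `v` for `x` in a vanilla term. -/
def vsub (v : VTerm) (x : ℕ) : VTerm → VTerm
  | var y => if y = x then v else var y
  | lam y t => lam y (vsub v x t)
  | cut s y t => cut (vsub v x s) y (vsub v x t)
  | sub z s y t =>
      if z = x then
        match v with
        | var w => sub w (vsub v x s) y (vsub v x t)
        | lam w u => cut (cut (vsub v x s) w u) y (vsub v x t)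
        | cut _ _ _ => sub z (vsub v x s) y (vsub v x t)
        | sub _ _ _ _ => sub z (vsub v x s) y (vsub v x t)
      else sub z (vsub v x s) y (vsub v x t)

/-- Cut-free vanilla terms. -/
def CutFree : VTerm → Prop
  | var _ => True
  | lam _ t => CutFree t
  | cut _ _ _ => False
  | sub _ s _ t => CutFree s ∧ CutFree t

end VTerm

/-- Left contexts: L ::= ⟨·⟩ | [t/x]L | [y t/x]L. -/
inductive LCtx : Type
  | hole : LCtx
  | cut : VTerm → ℕ → LCtx → LCtx
  | sub : ℕ → VTerm → ℕ → LCtx → LCtx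
  deriving DecidableEq

namespace LCtx

def plug : LCtx → VTerm → VTerm
  | hole, t => t
  | cut s x L, t => VTerm.cut s x (L.plug t)
  | sub y s x L, t => VTerm.sub y s x (L.plug t)

/-- Variables captured by a left context. -/
def dom : LCtx → Finset ℕ
  | hole => ∅
  | cut _ x L => insert x L.dom
  | sub _ _ x L => insert x L.dom

end LCtx

/-- General contexts for vanilla terms. -/
inductive GCtx : Type
  | hole : GCtx
  | lam : ℕ → GCtx → GCtx
  | cutL : GCtx → ℕ → VTerm → GCtx
  | cutR : VTerm → ℕ → GCtx → GCtx
  | subL : ℕ → GCtx → ℕ → VTerm → GCtx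
  | subR : ℕ → VTerm → ℕ → GCtx → GCtx

namespace GCtx

def plug : GCtx → VTerm → VTerm
  | hole, t => t
  | lam x C, t => VTerm.lam x (C.plug t)
  | cutL C x s, t => VTerm.cut (C.plug t) x s
  | cutR s x C, t => VTerm.cut s x (C.plug t)
  | subL y C x s, t => VTerm.sub y (C.plug t) x s
  | subR y s x C, t => VTerm.sub y s x (C.plug t)

end GCtx

/-- Root cut-elimination rule: [L⟨v⟩/x]t → L⟨{v/x}t⟩. -/
inductive CutRoot : VTerm → VTerm → Prop
  | mk (L : LCtx) (v : VTerm) (x : ℕ) (t : VTerm) (hv : v.IsValue) :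
      CutRoot (VTerm.cut (L.plug v) x t) (L.plug (VTerm.vsub v x t))

/-- Cut elimination: closure of the root rule under general contexts. -/
inductive CutStep : VTerm → VTerm → Prop
  | mk (C : GCtx) {t s : VTerm} : CutRoot t s → CutStep (C.plug t) (C.plug s)

/-- Renaming root step: the value is a variable. -/
inductive RenRoot : VTerm → VTerm → Prop
  | mk (L : LCtx) (y x : ℕ) (t : VTerm) :
      RenRoot (VTerm.cut (L.plug (VTerm.var y)) x t) (L.plug (VTerm.vsub (VTerm.var y) x t))

/-- Renaming cut-elimination steps. -/
inductive RenStep : VTerm → VTerm → Prop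
  | mk (C : GCtx) {t s : VTerm} : RenRoot t s → RenStep (C.plug t) (C.plug s)

/-- Strong normalization for cut elimination. -/
def SN (t : VTerm) : Prop := Acc (fun a b => CutStep b a) t

/-- Splitting of a vanilla term as a left context around a value. -/
def split : VTerm → LCtx × VTerm
  | VTerm.cut s x t => let p := split t; (LCtx.cut s x p.1, p.2)
  | VTerm.sub y s x t => let p := split t; (LCtx.sub y s x p.1, p.2)
  | t => (LCtx.hole, t)

/-- General substitution {s/x}t := L⟨{v/x}t⟩ for s = L⟨v⟩. -/
def gsub (s : VTerm) (x : ℕ) (t : VTerm) : VTerm :=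
  (split s).1.plug (VTerm.vsub (split s).2 x t)

/-- Formulas of minimal intuitionistic logic. -/
inductive Ty : Type
  | base : Ty
  | arr : Ty → Ty → Ty
  deriving DecidableEq

/-- Typing judgement of the vanilla sequent calculus (additive). -/
inductive Jud : (ℕ → Option Ty) → VTerm → Ty → Prop
  | ax (Γ : ℕ → Option Ty) (x : ℕ) (A : Ty) :
      Γ x = some A → Jud Γ (VTerm.var x) A
  | cut (Γ : ℕ → Option Ty) (s : VTerm) (x : ℕ) (t : VTerm) (A B : Ty) :
      Γ x = none → Jud Γ s A →
      Jud (Function.update Γ x (some A)) t B → Jud Γ (VTerm.cut s x t) B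
  | lamr (Γ : ℕ → Option Ty) (x : ℕ) (t : VTerm) (A B : Ty) :
      Γ x = none → Jud (Function.update Γ x (some A)) t B →
      Jud Γ (VTerm.lam x t) (Ty.arr A B)
  | subl (Γ : ℕ → Option Ty) (y : ℕ) (s : VTerm) (x : ℕ) (t : VTerm) (A B C : Ty) :
      Γ x = none → (Γ y = none ∨ Γ y = some (Ty.arr A B)) →
      Jud Γ s A → Jud (Function.update Γ x (some B)) t C →
      Jud (Function.update Γ y (some (Ty.arr A B))) (VTerm.sub y s x t) C

/-- Natural λ-terms with explicit substitutions. -/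
inductive NTerm : Type
  | var : ℕ → NTerm
  | lam : ℕ → NTerm → NTerm
  | app : NTerm → NTerm → NTerm
  | es : NTerm → ℕ → NTerm → NTerm
  deriving DecidableEq

namespace NTerm

inductive IsValue : NTerm → Prop
  | var (x : ℕ) : IsValue (var x)
  | lam (x : ℕ) (t : NTerm) : IsValue (lam x t)

def fv : NTerm → Finset ℕ
  | var x => {x}
  | lam x t => fv t \ {x}
  | app t s => fv t ∪ fv s
  | es s x t => fv s ∪ (fv t \ {x})

/-- Meta-level substitution in natural terms. -/
def nsub (v : NTerm) (x : ℕ) : NTerm → NTerm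
  | var y => if y = x then v else var y
  | lam y t => lam y (nsub v x t)
  | app t s => app (nsub v x t) (nsub v x s)
  | es s y t => es (nsub v x s) y (nsub v x t)

/-- Size: number of constructors. -/
def size : NTerm → ℕ
  | var _ => 1
  | lam _ t => size t + 1
  | app t s => size t + size s + 1
  | es s _ t => size s + size t + 1

end NTerm

/-- List-of-substitutions contexts in the natural calculus. -/
inductive NLCtx : Type
  | hole : NLCtx
  | es : NTerm → ℕ → NLCtx → NLCtx

def NLCtx.plug : NLCtx → NTerm → NTerm
  | NLCtx.hole, t => t
  | NLCtx.es s x L, t => NTerm.es s x (L.plug t)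

/-- General contexts for natural terms. -/
inductive NGCtx : Type
  | hole : NGCtx
  | lam : ℕ → NGCtx → NGCtx
  | appL : NGCtx → NTerm → NGCtx
  | appR : NTerm → NGCtx → NGCtx
  | esL : NGCtx → ℕ → NTerm → NGCtx
  | esR : NTerm → ℕ → NGCtx → NGCtx

def NGCtx.plug : NGCtx → NTerm → NTerm
  | NGCtx.hole, t => t
  | NGCtx.lam x C, t => NTerm.lam x (C.plug t)
  | NGCtx.appL C s, t => NTerm.app (C.plug t) s
  | NGCtx.appR s C, t => NTerm.app s (C.plug t)
  | NGCtx.esL C x s, t => NTerm.es (C.plug t) x s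
  | NGCtx.esR s x C, t => NTerm.es s x (C.plug t)

/-- Root dB rule: L⟨λx.t⟩ s → L⟨[s/x]t⟩. -/
inductive DBRoot : NTerm → NTerm → Prop
  | mk (L : NLCtx) (x : ℕ) (t s : NTerm) :
      DBRoot (NTerm.app (L.plug (NTerm.lam x t)) s) (L.plug (NTerm.es s x t))

/-- Root vs rule: [L⟨v⟩/x]t → L⟨t{v/x}⟩. -/
inductive VsRoot : NTerm → NTerm → Prop
  | mk (L : NLCtx) (v : NTerm) (x : ℕ) (t : NTerm) (hv : v.IsValue) :
      VsRoot (NTerm.es (L.plug v) x t) (L.plug (NTerm.nsub v x t))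

inductive DB : NTerm → NTerm → Prop
  | mk (C : NGCtx) {t s : NTerm} : DBRoot t s → DB (C.plug t) (C.plug s)

inductive Vs : NTerm → NTerm → Prop
  | mk (C : NGCtx) {t s : NTerm} : VsRoot t s → Vs (C.plug t) (C.plug s)

/-- VSC reduction: dB ∪ vs. -/
def VSC (t s : NTerm) : Prop := DB t s ∨ Vs t s

/-- Translation from vanilla terms to natural terms. -/
def VTerm.toN : VTerm → NTerm
  | VTerm.var x => NTerm.var x
  | VTerm.lam x t => NTerm.lam x t.toN
  | VTerm.cut s x t => NTerm.es s.toN x t.toN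
  | VTerm.sub y s x t => NTerm.es (NTerm.app (NTerm.var y) s.toN) x t.toN

/-- Translation of left contexts. -/
def LCtx.toN : LCtx → NLCtx
  | LCtx.hole => NLCtx.hole
  | LCtx.cut s x L => NLCtx.es s.toN x L.toN
  | LCtx.sub y s x L => NLCtx.es (NTerm.app (NTerm.var y) s.toN) x L.toN

/-- Translation from natural terms to vanilla terms (with fresh choices). -/
def NTerm.toS : NTerm → VTerm
  | NTerm.var x => VTerm.var x
  | NTerm.lam x t => VTerm.lam x t.toS
  | NTerm.es s x t => VTerm.cut s.toS x t.toS
  | NTerm.app t s =>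
      let a := t.toS
      let b := s.toS
      let x := (a.fv ∪ b.fv).sup id + 1
      VTerm.cut a x (VTerm.sub x b (x + 1) (VTerm.var (x + 1)))

/-- Weak contexts. -/
inductive WCtx : Type
  | hole : WCtx
  | cutR : VTerm → ℕ → WCtx → WCtx
  | cutL : WCtx → ℕ → VTerm → WCtx
  | subR : ℕ → VTerm → ℕ → WCtx → WCtx
  | subL : ℕ → WCtx → ℕ → VTerm → WCtx

namespace WCtx

def plug : WCtx → VTerm → VTerm
  | hole, t => t
  | cutR s x W, t => VTerm.cut s x (W.plug t)
  | cutL W x s, t => VTerm.cut (W.plug t) x s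
  | subR y s x W, t => VTerm.sub y s x (W.plug t)
  | subL y W x s, t => VTerm.sub y (W.plug t) x s

/-- Free variables of a weak context (ignoring the hole). -/
def fv : WCtx → Finset ℕ
  | hole => ∅
  | cutR s x W => s.fv ∪ (W.fv \ {x})
  | cutL W x s => W.fv ∪ (s.fv \ {x})
  | subR y s x W => insert y (s.fv ∪ (W.fv \ {x}))
  | subL y W x s => insert y (W.fv ∪ (s.fv \ {x}))

/-- Variables captured by a weak context along the hole path. -/
def dom : WCtx → Finset ℕ
  | hole => ∅
  | cutR _ x W => insert x W.dom
  | cutL W _ _ => W.dom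
  | subR _ _ x W => insert x W.dom
  | subL _ W _ _ => W.dom

end WCtx

/-- Structural equivalence: congruence closure of moving left rules past weak contexts. -/
inductive SEq : VTerm → VTerm → Prop
  | root1 (s : VTerm) (x : ℕ) (W : WCtx) (t : VTerm)
      (h1 : x ∉ W.fv) (h2 : Disjoint s.fv W.dom) :
      SEq (VTerm.cut s x (W.plug t)) (W.plug (VTerm.cut s x t))
  | root2 (y : ℕ) (s : VTerm) (x : ℕ) (W : WCtx) (t : VTerm)
      (h1 : x ∉ W.fv) (h2 : Disjoint (insert y s.fv) W.dom) :
      SEq (VTerm.sub y s x (W.plug t)) (W.plug (VTerm.sub y s x t))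
  | refl (t : VTerm) : SEq t t
  | symm {t s : VTerm} : SEq t s → SEq s t
  | trans {t s u : VTerm} : SEq t s → SEq s u → SEq t u
  | ctx (C : GCtx) {t s : VTerm} : SEq t s → SEq (C.plug t) (C.plug s)

/-- Iterated relation: exactly `n` steps. -/
def RelPow {α : Type _} (r : α → α → Prop) : ℕ → α → α → Prop
  | 0, a, b => a = b
  | n + 1, a, c => ∃ b, r a b ∧ RelPow r n b c

/-- Elimination contexts E = L⟨[⟨·⟩/x]t⟩. -/
structure ECtx where
  L : LCtx
  x : ℕ
  t : VTerm

/-- Plugging a term in an elimination context. -/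
def ECtx.plug (E : ECtx) (u : VTerm) : VTerm := E.L.plug (VTerm.cut u E.x E.t)

/-- Dual of a set of terms: elimination contexts producing SN terms. -/
def dualT (S : Set VTerm) : Set ECtx := {E | ∀ t ∈ S, SN (E.plug t)}

/-- Dual of a set of elimination contexts. -/
def dualE (T : Set ECtx) : Set VTerm := {t | ∀ E ∈ T, SN (E.plug t)}

section Aux

open VTerm

/-- size of vanilla terms -/
def vsize : VTerm → ℕ
  | VTerm.var _ => 1
  | VTerm.lam _ t => vsize t + 1
  | VTerm.cut s _ t => vsize s + vsize t + 1
  | VTerm.sub _ s _ t => vsize s + vsize t + 1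

/-- number of cuts -/
def ncuts : VTerm → ℕ
  | VTerm.var _ => 0
  | VTerm.lam _ t => ncuts t
  | VTerm.cut s _ t => ncuts s + ncuts t + 1
  | VTerm.sub _ s _ t => ncuts s + ncuts t

def GoodV : VTerm → Prop
  | VTerm.var _ => True
  | VTerm.lam _ t => GoodV t
  | VTerm.cut s _ t => (∃ y, (split s).2 = VTerm.var y) ∧ GoodV s ∧ GoodV t
  | VTerm.sub _ s _ t => GoodV s ∧ GoodV t

def GoodL : LCtx → Prop
  | LCtx.hole => True
  | LCtx.cut s _ L => (∃ y, (split s).2 = VTerm.var y) ∧ GoodV s ∧ GoodL L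
  | LCtx.sub _ s _ L => GoodV s ∧ GoodL L

def vsizeL : LCtx → ℕ
  | LCtx.hole => 0
  | LCtx.cut s _ L => vsize s + vsizeL L + 1
  | LCtx.sub _ s _ L => vsize s + vsizeL L + 1

def ncutsL : LCtx → ℕ
  | LCtx.hole => 0
  | LCtx.cut s _ L => ncuts s + ncutsL L + 1
  | LCtx.sub _ s _ L => ncuts s + ncutsL L

lemma split_plug : ∀ t : VTerm, (split t).1.plug (split t).2 = t := by
  intro t
  induction t with
  | var x => rfl
  | lam x t ih => rfl
  | cut s x t ihs iht => simp [split, LCtx.plug, iht]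
  | sub y s x t ihs iht => simp [split, LCtx.plug, iht]

lemma vsize_plug (L : LCtx) (u : VTerm) : vsize (L.plug u) = vsizeL L + vsize u := by
  induction L with
  | hole => simp [LCtx.plug, vsizeL]
  | cut s x L ih => simp [LCtx.plug, vsizeL, vsize, ih]; omega
  | sub y s x L ih => simp [LCtx.plug, vsizeL, vsize, ih]; omega

lemma ncuts_plug (L : LCtx) (u : VTerm) : ncuts (L.plug u) = ncutsL L + ncuts u := by
  induction L with
  | hole => simp [LCtx.plug, ncutsL]
  | cut s x L ih => simp [LCtx.plug, ncutsL, ncuts, ih]; omega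
  | sub y s x L ih => simp [LCtx.plug, ncutsL, ncuts, ih]; omega

lemma vsize_vsub_var (w x : ℕ) : ∀ t : VTerm, vsize (vsub (VTerm.var w) x t) = vsize t := by
  intro t
  induction t with
  | var y => by_cases h : y = x <;> simp [vsub, h, vsize]
  | lam y t ih => simp [vsub, vsize, ih]
  | cut s y t ihs iht => simp [vsub, vsize, ihs, iht]
  | sub z s y t ihs iht => by_cases h : z = x <;> simp [vsub, h, vsize, ihs, iht]

lemma ncuts_vsub_var (w x : ℕ) : ∀ t : VTerm, ncuts (vsub (VTerm.var w) x t) = ncuts t := by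
  intro t
  induction t with
  | var y => by_cases h : y = x <;> simp [vsub, h, ncuts]
  | lam y t ih => simp [vsub, ncuts, ih]
  | cut s y t ihs iht => simp [vsub, ncuts, ihs, iht]
  | sub z s y t ihs iht => by_cases h : z = x <;> simp [vsub, h, ncuts, ihs, iht]

lemma split_snd_vsub_var (w x : ℕ) :
    ∀ t : VTerm, (split (vsub (VTerm.var w) x t)).2 = vsub (VTerm.var w) x (split t).2 := by
  intro t
  induction t with
  | var y => by_cases h : y = x <;> simp [vsub, h, split]
  | lam y t ih => simp [vsub, split]
  | cut s y t ihs iht => simp [vsub, split, iht]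
  | sub z s y t ihs iht => by_cases h : z = x <;> simp [vsub, h, split, iht]

lemma GoodV_vsub_var (w x : ℕ) : ∀ t : VTerm, GoodV t → GoodV (vsub (VTerm.var w) x t) := by
  intro t
  induction t with
  | var y => intro _; by_cases h : y = x <;> simp [vsub, h, GoodV]
  | lam y t ih => intro h; simpa [vsub, GoodV] using ih h
  | cut s y t ihs iht =>
      rintro ⟨⟨z, hz⟩, hs, ht⟩
      refine ⟨?_, ihs hs, iht ht⟩
      rw [split_snd_vsub_var, hz]
      by_cases h : z = x <;> simp [vsub, h]
  | sub z s y t ihs iht =>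
      rintro ⟨hs, ht⟩
      by_cases h : z = x <;> simp [vsub, h, GoodV] <;> exact ⟨ihs hs, iht ht⟩

lemma GoodV_plug (L : LCtx) (u : VTerm) (hL : GoodL L) (hu : GoodV u) : GoodV (L.plug u) := by
  induction L with
  | hole => exact hu
  | cut s x L ih => exact ⟨hL.1, hL.2.1, ih hL.2.2⟩
  | sub y s x L ih => exact ⟨hL.1, ih hL.2⟩

lemma GoodL_of_plug (L : LCtx) (u : VTerm) (h : GoodV (L.plug u)) : GoodL L := by
  induction L with
  | hole => trivial
  | cut s x L ih => exact ⟨h.1, h.2.1, ih h.2.2⟩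
  | sub y s x L ih => exact ⟨h.1, ih h.2⟩

lemma cutFree_of_ncuts (t : VTerm) (h : ncuts t = 0) : CutFree t := by
  induction t with
  | var x => trivial
  | lam x t ih => exact ih h
  | cut s x t ihs iht => simp [ncuts] at h
  | sub y s x t ihs iht =>
      simp [ncuts] at h
      exact ⟨ihs h.1, iht h.2⟩

def GCtx.comp : GCtx → GCtx → GCtx
  | GCtx.hole, D => D
  | GCtx.lam x C, D => GCtx.lam x (C.comp D)
  | GCtx.cutL C x s, D => GCtx.cutL (C.comp D) x s
  | GCtx.cutR s x C, D => GCtx.cutR s x (C.comp D)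
  | GCtx.subL y C x s, D => GCtx.subL y (C.comp D) x s
  | GCtx.subR y s x C, D => GCtx.subR y s x (C.comp D)

lemma GCtx.comp_plug (C D : GCtx) (t : VTerm) :
    (C.comp D).plug t = C.plug (D.plug t) := by
  induction C <;> simp [GCtx.comp, GCtx.plug, *]

lemma RenStep.ctx (C : GCtx) {a b : VTerm} (h : RenStep a b) :
    RenStep (C.plug a) (C.plug b) := by
  rcases h with ⟨D, h⟩
  rw [← GCtx.comp_plug, ← GCtx.comp_plug]
  exact RenStep.mk _ h

lemma RelPow.ctxRen (C : GCtx) : ∀ k {a b : VTerm}, RelPow RenStep k a b →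
    RelPow RenStep k (C.plug a) (C.plug b) := by
  intro k
  induction k with
  | zero => intro a b h; exact congrArg C.plug h
  | succ n ih =>
      rintro a b ⟨c, hac, hcb⟩
      exact ⟨C.plug c, hac.ctx C, ih hcb⟩

lemma RelPow.comp {α : Type _} {r : α → α → Prop} :
    ∀ m n {a b c : α}, RelPow r m a b → RelPow r n b c → RelPow r (m + n) a c := by
  intro m
  induction m with
  | zero => intro n a b c h h'; cases h; simpa using h'
  | succ k ih =>
      rintro n a b c ⟨d, had, hdb⟩ h'
      have he : k + 1 + n = (k + n) + 1 := by omega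
      rw [he]
      exact ⟨d, had, ih n hdb h'⟩

lemma main_lemma : ∀ n (t : VTerm), vsize t ≤ n → GoodV t →
    ∃ u, RelPow RenStep (ncuts t) t u ∧ CutFree u := by
  intro n
  induction n with
  | zero => intro t h; cases t <;> simp [vsize] at h
  | succ n ih =>
      intro t hsz hg
      cases t with
      | var x => exact ⟨VTerm.var x, rfl, trivial⟩
      | lam x t =>
          obtain ⟨u, hr, hcf⟩ := ih t (by simp [vsize] at hsz; omega) hg
          exact ⟨VTerm.lam x u, RelPow.ctxRen (GCtx.lam x GCtx.hole) _ hr, hcf⟩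
      | sub y s x t =>
          obtain ⟨us, hrs, hcfs⟩ := ih s (by simp [vsize] at hsz; omega) hg.1
          obtain ⟨ut, hrt, hcft⟩ := ih t (by simp [vsize] at hsz; omega) hg.2
          refine ⟨VTerm.sub y us x ut, ?_, hcfs, hcft⟩
          have h1 := RelPow.ctxRen (GCtx.subL y GCtx.hole x t) _ hrs
          have h2 := RelPow.ctxRen (GCtx.subR y us x GCtx.hole) _ hrt
          simp [GCtx.plug] at h1 h2
          exact RelPow.comp _ _ h1 h2
      | cut s x t =>
          obtain ⟨⟨y, hy⟩, hs, ht⟩ := hg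
          set L := (split s).1 with hL
          have hsL : L.plug (VTerm.var y) = s := by rw [hL, ← hy]; exact split_plug s
          set t' := L.plug (vsub (VTerm.var y) x t) with ht'
          have hstep : RenStep (VTerm.cut s x t) t' := by
            have := RenStep.mk GCtx.hole (RenRoot.mk L y x t)
            simpa [GCtx.plug, hsL] using this
          have hg' : GoodV t' :=
            GoodV_plug _ _ (GoodL_of_plug L _ (hsL ▸ hs)) (GoodV_vsub_var _ _ _ ht)
          have hszs : vsize s = vsizeL L + 1 := by
            rw [← hsL, vsize_plug]; rfl
          have hsz' : vsize t' ≤ n := by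
            rw [ht', vsize_plug, vsize_vsub_var]
            simp [vsize] at hsz
            omega
          obtain ⟨u, hr, hcf⟩ := ih t' hsz' hg'
          have hcs : ncuts s = ncutsL L := by
            rw [← hsL, ncuts_plug]; rfl
          have hct' : ncuts t' = ncuts s + ncuts t := by
            rw [ht', ncuts_plug, ncuts_vsub_var, hcs]
          refine ⟨u, ?_, hcf⟩
          have : ncuts (VTerm.cut s x t) = ncuts t' + 1 := by simp [ncuts, hct']
          rw [this]
          exact ⟨t', hstep, hr⟩

/- Natural term side -/

def NGCtx.comp : NGCtx → NGCtx → NGCtx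
  | NGCtx.hole, D => D
  | NGCtx.lam x C, D => NGCtx.lam x (C.comp D)
  | NGCtx.appL C s, D => NGCtx.appL (C.comp D) s
  | NGCtx.appR s C, D => NGCtx.appR s (C.comp D)
  | NGCtx.esL C x s, D => NGCtx.esL (C.comp D) x s
  | NGCtx.esR s x C, D => NGCtx.esR s x (C.comp D)

lemma NGCtx.comp_plug (C D : NGCtx) (t : NTerm) :
    (C.comp D).plug t = C.plug (D.plug t) := by
  induction C <;> simp [NGCtx.comp, NGCtx.plug, *]

lemma VSC.ctx (C : NGCtx) {a b : NTerm} (h : VSC a b) : VSC (C.plug a) (C.plug b) := by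
  rcases h with ⟨D, h⟩ | ⟨D, h⟩
  · left; rw [← NGCtx.comp_plug, ← NGCtx.comp_plug]; exact DB.mk _ h
  · right; rw [← NGCtx.comp_plug, ← NGCtx.comp_plug]; exact Vs.mk _ h

def NNormal (t : NTerm) : Prop := ¬ ∃ s, VSC t s

lemma NNormal.of_ctx {C : NGCtx} {a : NTerm} (h : NNormal (C.plug a)) : NNormal a := by
  rintro ⟨s, hs⟩
  exact h ⟨C.plug s, hs.ctx C⟩

def nhead : NTerm → NTerm
  | NTerm.es _ _ t => nhead t
  | t => t

lemma nhead_plug : ∀ t : NTerm, ∃ L : NLCtx, L.plug (nhead t) = t := by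
  intro t
  induction t with
  | var x => exact ⟨NLCtx.hole, rfl⟩
  | lam x t _ => exact ⟨NLCtx.hole, rfl⟩
  | app a b _ _ => exact ⟨NLCtx.hole, rfl⟩
  | es s x t _ iht =>
      obtain ⟨L, hL⟩ := iht
      exact ⟨NLCtx.es s x L, by simp [NLCtx.plug, nhead, hL]⟩

lemma split_snd_toS (s : NTerm) (h : ∀ x u, nhead s ≠ NTerm.lam x u) :
    ∃ z, (split s.toS).2 = VTerm.var z := by
  induction s with
  | var x => exact ⟨x, rfl⟩
  | lam x t _ => exact absurd rfl (h x t)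
  | app a b _ _ =>
      exact ⟨(a.toS.fv ∪ b.toS.fv).sup id + 1 + 1, rfl⟩
  | es s x t _ iht =>
      obtain ⟨z, hz⟩ := iht (by simpa [nhead] using h)
      exact ⟨z, by simp [NTerm.toS, split, hz]⟩

lemma GoodV_toS (t : NTerm) (h : NNormal t) : GoodV t.toS := by
  induction t with
  | var x => trivial
  | lam x t ih =>
      exact ih (NNormal.of_ctx (C := NGCtx.lam x NGCtx.hole) h)
  | app a b iha ihb =>
      have hna : NNormal a := NNormal.of_ctx (C := NGCtx.appL NGCtx.hole b) h
      have hnb : NNormal b := NNormal.of_ctx (C := NGCtx.appR a NGCtx.hole) h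
      have hlam : ∀ x u, nhead a ≠ NTerm.lam x u := by
        intro x u hxu
        obtain ⟨L, hL⟩ := nhead_plug a
        rw [hxu] at hL
        exact h ⟨_, Or.inl (by
          have := DB.mk NGCtx.hole (DBRoot.mk L x u b)
          simpa [NGCtx.plug, hL] using this)⟩
      obtain ⟨z, hz⟩ := split_snd_toS a hlam
      exact ⟨⟨z, hz⟩, iha hna, ihb hnb, trivial⟩
  | es s x t ihs iht =>
      have hns : NNormal s := NNormal.of_ctx (C := NGCtx.esL NGCtx.hole x t) h
      have hnt : NNormal t := NNormal.of_ctx (C := NGCtx.esR s x NGCtx.hole) h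
      have hlam : ∀ y u, nhead s ≠ NTerm.lam y u := by
        intro y u hyu
        obtain ⟨L, hL⟩ := nhead_plug s
        rw [hyu] at hL
        exact h ⟨_, Or.inr (by
          have := Vs.mk NGCtx.hole (VsRoot.mk L (NTerm.lam y u) x t (NTerm.IsValue.lam y u))
          simpa [NGCtx.plug, hL] using this)⟩
      obtain ⟨z, hz⟩ := split_snd_toS s hlam
      exact ⟨⟨z, hz⟩, ihs hns, iht hnt⟩

lemma ncuts_toS_le (t : NTerm) : ncuts t.toS ≤ t.size := by
  induction t with
  | var x => simp [NTerm.toS, ncuts, NTerm.size]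
  | lam x t ih => simp [NTerm.toS, ncuts, NTerm.size]; omega
  | app a b iha ihb => simp [NTerm.toS, ncuts, NTerm.size]; omega
  | es s x t ihs iht => simp [NTerm.toS, ncuts, NTerm.size]; omega

end Aux

/-- the translation of a VSC-normal natural term reduces, by at most
|t| renaming cut-elimination steps, to a cut-free vanilla term. -/
theorem toS_of_VSC_normal_almost_cutFree (t : NTerm)
    (hnf : ¬ ∃ s : NTerm, VSC t s) :
    ∃ (k : ℕ) (u : VTerm), k ≤ t.size ∧ RelPow RenStep k t.toS u ∧ u.CutFree := by
  obtain ⟨u, hr, hcf⟩ := main_lemma (vsize t.toS) t.toS le_rfl (GoodV_toS t hnf)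
  exact ⟨ncuts t.toS, u, ncuts_toS_le t, hr, hcf⟩
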